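/- arXiv:1611.00176 — 2 statements merged into one kernel-verified Lean document; each statement's English description precedes it below -/
import Mathlib

section
/- Let P be a preorder, A ⊆ P upward closed with Φ(A) ⊆ A where Φ(A) = { p : ∃ dense D, ∀ q ∈ D (p ≤ q → q ∈ A) }, and Σ = P \ A nonempty. Let (Dₙ)_{n∈ℕ} be countably many dense subsets of P. Then for every p ∈ Σ there exists a filter G ⊆ Σ of the preorder P with p ∈ G meeting every Dₙ. -/
def IsDenseSet {P : Type*} [Preorder P] (D : Set P) : Prop :=
  ∀ p : P, ∃ q ∈ D, p ≤ q

def Phi {P : Type*} [Preorder P] (A : Set P) : Set P :=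
  {p | ∃ D : Set P, IsDenseSet D ∧ ∀ q ∈ D, p ≤ q → q ∈ A}

def IsPFilter {P : Type*} [Preorder P] (G : Set P) : Prop :=
  (∀ p q, q ∈ G → p ≤ q → p ∈ G) ∧
  (∀ p ∈ G, ∀ q ∈ G, ∃ r ∈ G, p ≤ r ∧ q ≤ r)

/-- Generic-style filters inside Solovay's set `Σ = P \ A`. -/
theorem generic_filter_in_sigma {P : Type*} [Preorder P] (A : Set P)
    (hA : ∀ p q, p ∈ A → p ≤ q → q ∈ A) (hfix : Phi A ⊆ A)
    (hne : (Set.univ \ A : Set P).Nonempty)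
    (D : ℕ → Set P) (hD : ∀ n, IsDenseSet (D n)) :
    ∀ p ∈ (Set.univ \ A : Set P),
      ∃ G : Set P, G ⊆ (Set.univ \ A : Set P) ∧ IsPFilter G ∧ p ∈ G ∧
        ∀ n, (G ∩ D n).Nonempty := by
  intro p hp
  classical
  have key : ∀ q : P, q ∉ A → ∀ n, ∃ r, r ∈ D n ∧ q ≤ r ∧ r ∉ A := by
    intro q hq n
    by_contra h
    push_neg at h
    exact hq (hfix ⟨D n, hD n, fun r hr hqr => h r hr hqr⟩)
  choose f hf1 hf2 hf3 using key
  let seq : ℕ → {x : P // x ∉ A} := fun n =>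
    Nat.rec ⟨p, hp.2⟩ (fun n x => ⟨f x.1 x.2 n, hf3 x.1 x.2 n⟩) n
  have hstep : ∀ n, (seq n).1 ≤ (seq (n + 1)).1 := fun n => hf2 _ _ n
  have hmono : ∀ m n, m ≤ n → (seq m).1 ≤ (seq n).1 := by
    intro m n hmn
    induction n with
    | zero => simp_all
    | succ k ih =>
      rcases Nat.lt_or_ge m (k + 1) with h | h
      · exact le_trans (ih (Nat.lt_succ_iff.mp h)) (hstep k)
      · have : m = k + 1 := le_antisymm hmn h
        subst this; exact le_refl _
  refine ⟨{q | ∃ n, q ≤ (seq n).1}, ?_, ⟨?_, ?_⟩, ⟨0, le_refl _⟩, ?_⟩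
  · rintro q ⟨n, hq⟩
    refine ⟨trivial, fun hqA => (seq n).2 (hA q _ hqA hq)⟩
  · rintro a b ⟨n, hb⟩ hab
    exact ⟨n, le_trans hab hb⟩
  · rintro a ⟨m, ha⟩ b ⟨n, hb⟩
    exact ⟨(seq (max m n)).1, ⟨max m n, le_refl _⟩,
      le_trans ha (hmono m _ (le_max_left m n)),
      le_trans hb (hmono n _ (le_max_right m n))⟩
  · intro n
    exact ⟨(seq (n + 1)).1, ⟨n + 1, le_refl _⟩, hf1 _ _ n⟩
end

section
/- Let P be a preorder with order ≤, let 𝒢 be a family of subsets of P, and let Σ : 𝒢 → 𝒫(P) be a function satisfying: (i) G ⊆ Σ(G) for every G ∈ 𝒢; (ii) each Σ(G) is ≤-downward closed in the sense that q ∈ Σ(G), p ∈ P, p ≤ q imply p ∈ Σ(G); (iii) for every G ∈ 𝒢 and q ∈ Σ(G) there exists G' ∈ 𝒢 with q ∈ G' and Σ(G') = Σ(G). Define p ≤_t q iff for every G ∈ 𝒢 with q ∈ G one has p ∈ Σ(G). Then ≤_t is transitive. -/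
/-- Abstract Solovay order `≤_t` is transitive (Lemma sig1). -/
theorem leT_trans {P : Type*} [Preorder P] (𝒢 : Set (Set P)) (S : Set P → Set P)
    (h1 : ∀ G ∈ 𝒢, G ⊆ S G)
    (h2 : ∀ G ∈ 𝒢, ∀ p q, q ∈ S G → p ≤ q → p ∈ S G)
    (h3 : ∀ G ∈ 𝒢, ∀ q ∈ S G, ∃ G' ∈ 𝒢, q ∈ G' ∧ S G' = S G)
    (p q r : P)
    (hpq : ∀ G ∈ 𝒢, q ∈ G → p ∈ S G)
    (hqr : ∀ G ∈ 𝒢, r ∈ G → q ∈ S G) :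
    ∀ G ∈ 𝒢, r ∈ G → p ∈ S G := by
  intro G hG hr
  obtain ⟨G', hG', hqG', hSG'⟩ := h3 G hG q (hqr G hG hr)
  have := hpq G' hG' hqG'
  rwa [hSG'] at this
end
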